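/- For every ample concept class C over X there exist: (a) a bijection r' : C → X(C) satisfying condition (C1), i.e., for every c ∈ C the cube of 2^X with support r'(c) containing c is a cube of C; and (b) an injection r'' : C → 2^X satisfying condition (C2), i.e., for every cube B of C there is a unique c ∈ B with r''(c) ∩ supp(B) = ∅. -/

import Mathlib

variable {X : Type} [Fintype X] [DecidableEq X]

/-- Hamming distance between two subsets of `X` (size of symmetric difference). -/
def hdist (c c' : Finset X) : ℕ := ((c \ c') ∪ (c' \ c)).card

/-- The restriction `C|Y = {c ∩ Y : c ∈ C}`. -/
def restrictTo (C : Finset (Finset X)) (Y : Finset X) : Finset (Finset X) :=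
  C.image (· ∩ Y)

/-- `Y` is shattered by `C`, i.e. `C|Y = 2^Y`. -/
def Shatters (C : Finset (Finset X)) (Y : Finset X) : Prop :=
  ∀ s ∈ Y.powerset, ∃ c ∈ C, c ∩ Y = s

instance (C : Finset (Finset X)) : DecidablePred (Shatters C) := fun _ => by
  unfold Shatters; infer_instance

/-- The family `X̄(C)` of all sets shattered by `C`. -/
def shatteredSets (C : Finset (Finset X)) : Finset (Finset X) :=
  Finset.univ.filter (Shatters C)

/-- The VC dimension of `C`: maximum size of a shattered set. -/
def vcDim (C : Finset (Finset X)) : ℕ := (shatteredSets C).sup Finset.card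

/-- `C` is ample: `|C| = |X̄(C)|`. -/
def IsAmple (C : Finset (Finset X)) : Prop := C.card = (shatteredSets C).card

/-- `C` is a maximum class of VC dimension `d`. -/
def IsMaximumClass (C : Finset (Finset X)) (d : ℕ) : Prop :=
  vcDim C = d ∧ C.card = ∑ i ∈ Finset.range (d + 1), (Fintype.card X).choose i

/-- `B` is a cube with support `Y`: `B = {t ∪ s : s ⊆ Y}` for some `t ⊆ X \ Y`. -/
def IsCubeS (B : Finset (Finset X)) (Y : Finset X) : Prop :=
  ∃ t : Finset X, t ∩ Y = ∅ ∧ B = Y.powerset.image (fun s => t ∪ s)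

/-- `B` is a cube. -/
def IsCube (B : Finset (Finset X)) : Prop := ∃ Y, IsCubeS B Y

/-- `B` is a cube of `C`: a cube contained in `C`. -/
def IsCubeOf (C B : Finset (Finset X)) : Prop := B ⊆ C ∧ IsCube B

/-- `B` is a maximal cube of `C` (maximal under inclusion among cubes of `C`). -/
def IsMaximalCubeOf (C B : Finset (Finset X)) : Prop :=
  IsCubeOf C B ∧ ∀ B', IsCubeOf C B' → B ⊆ B' → B = B'

/-- `c` is a corner of `C`: a concept of `C` belonging to a unique maximal cube of `C`. -/
def IsCornerOf (C : Finset (Finset X)) (c : Finset X) : Prop :=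
  c ∈ C ∧ ∃! B, IsMaximalCubeOf C B ∧ c ∈ B

/-- The one-inclusion graph `G(C)`. -/
def oneInclusionGraph (C : Finset (Finset X)) : SimpleGraph {c : Finset X // c ∈ C} where
  Adj c c' := hdist c.1 c'.1 = 1
  symm := by
    constructor
    intro a b h
    simpa [hdist, Finset.union_comm] using h
  loopless := by
    constructor
    intro a h
    simp [hdist] at h

/-- `C` is isometric: `G(C)` is connected and graph distances equal Hamming distances. -/
def IsIsometric (C : Finset (Finset X)) : Prop :=
  (oneInclusionGraph C).Connected ∧
  ∀ c c' : {c : Finset X // c ∈ C}, (oneInclusionGraph C).dist c c' = hdist c.1 c'.1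

/-- `C` is weakly isometric: `G(C)` is connected and graph distances equal Hamming
distances for pairs at Hamming distance at most 2. -/
def IsWeaklyIsometric (C : Finset (Finset X)) : Prop :=
  (oneInclusionGraph C).Connected ∧
  ∀ c c' : {c : Finset X // c ∈ C}, hdist c.1 c'.1 ≤ 2 →
    (oneInclusionGraph C).dist c c' = hdist c.1 c'.1

/-- A list of concepts is a corner peeling if it has no duplicates and each element is a
corner of the corresponding level set. -/
def IsCornerPeeling (l : List (Finset X)) : Prop :=
  l.Nodup ∧ ∀ i (h : i < l.length), IsCornerOf ((l.take (i + 1)).toFinset) (l.get ⟨i, h⟩)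

/-- `C` is dismantlable: it admits a corner peeling ordering of all its concepts. -/
def Dismantlable (C : Finset (Finset X)) : Prop :=
  ∃ l : List (Finset X), l.toFinset = C ∧ IsCornerPeeling l

/-- Non-clashing condition for a map `r`. -/
def NonClashing (C : Finset (Finset X)) (r : Finset X → Finset X) : Prop :=
  ∀ c ∈ C, ∀ c' ∈ C, c ≠ c' → c ∩ (r c ∪ r c') ≠ c' ∩ (r c ∪ r c')

/-- `r` is a representation map for `C`: a non-clashing bijection from `C` onto `X̄(C)`. -/
def IsRepMap (C : Finset (Finset X)) (r : Finset X → Finset X) : Prop :=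
  (∀ c ∈ C, r c ∈ shatteredSets C) ∧
  Set.InjOn r ↑C ∧
  (∀ Y ∈ shatteredSets C, ∃ c ∈ C, r c = Y) ∧
  NonClashing C r

/-- `C` admits an unlabeled sample compression scheme of size `k`. -/
def HasUSCS (C : Finset (Finset X)) (k : ℕ) : Prop :=
  ∃ (α : Finset X → Finset X → Finset X) (β : Finset X → Finset X),
    ∀ (Y : Finset X), ∀ c ∈ C,
      α Y (c ∩ Y) ⊆ Y ∧ (α Y (c ∩ Y)).card ≤ k ∧
      β (α Y (c ∩ Y)) ∈ C ∧ β (α Y (c ∩ Y)) ∩ Y = c ∩ Y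

/-- The cube of `2^X` with support `Y` containing `c`. -/
def cubeAt (c Y : Finset X) : Finset (Finset X) :=
  Y.powerset.image (fun s => (c \ Y) ∪ s)

/-- Condition (C1): for every `c ∈ C`, the cube with support `r c` containing `c`
is a cube of `C`. -/
def CondC1 (C : Finset (Finset X)) (r : Finset X → Finset X) : Prop :=
  ∀ c ∈ C, cubeAt c (r c) ⊆ C

/-- Condition (C2): every cube of `C` has a unique concept `c` with `r c ∩ supp B = ∅`. -/
def CondC2 (C : Finset (Finset X)) (r : Finset X → Finset X) : Prop :=
  ∀ B Y, B ⊆ C → IsCubeS B Y → ∃! c, c ∈ B ∧ r c ∩ Y = ∅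

/-- The facet of the cross-polytope corresponding to a subset `c ⊆ X`:
`+x ∈ σ_c` iff `x ∈ c` (where `+x = Sum.inl x` and `-x = Sum.inr x`). -/
def facet (c : Finset X) : Finset (X ⊕ X) :=
  c.image Sum.inl ∪ (Finset.univ \ c).image Sum.inr

/-- A list of facets of the cross-polytope is a partial shelling. -/
def IsPartialShelling (L : List (Finset (X ⊕ X))) : Prop :=
  L.Nodup ∧ ∀ i j, i < j → j < L.length →
    ∃ k < j, ((L.getD k ∅) ∩ (L.getD j ∅)).card = Fintype.card X - 1 ∧
      (L.getD i ∅) ∩ (L.getD j ∅) ⊆ (L.getD k ∅) ∩ (L.getD j ∅)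

/-- `Q` is an incomplete cube for `(C, D)` with support `σ`: a cube of `C` whose
support `σ` is a missed simplex (shattered by `C` but not by `D`). -/
def IsIncompleteCube (C D Q : Finset (Finset X)) (σ : Finset X) : Prop :=
  Q ⊆ C ∧ IsCubeS Q σ ∧ Shatters C σ ∧ ¬ Shatters D σ

/-- `c` is the source of the incomplete cube `Q` with support `σ`:
`c ∈ Q` and `c ∩ σ ∉ D|σ`. -/
def IsSource (D Q : Finset (Finset X)) (σ : Finset X) (c : Finset X) : Prop :=
  c ∈ Q ∧ c ∩ σ ∉ restrictTo D σ

/-- The restriction `C_x = C|(X \ {x})`, with concepts viewed as subsets of `X`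
avoiding `x`. -/
def restrictX (C : Finset (Finset X)) (x : X) : Finset (Finset X) :=
  C.image (·.erase x)

/-- The reduction `C^x = {c ⊆ X \ {x} : c ∈ C and c ∪ {x} ∈ C}`. -/
def reduction (C : Finset (Finset X)) (x : X) : Finset (Finset X) :=
  C.filter (fun c => x ∉ c ∧ insert x c ∈ C)

/-- The interval `B(c,c') = {t : d(c,t) + d(t,c') = d(c,c')}`. -/
def interval (c c' : Finset X) : Finset (Finset X) :=
  Finset.univ.filter (fun t => hdist c t + hdist t c' = hdist c c')

/-- `C'` is convex in `C`. -/
def IsConvexIn (C C' : Finset (Finset X)) : Prop :=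
  ∀ c ∈ C', ∀ c'' ∈ C', interval c c'' ∩ C ⊆ C'

/-- `C'` is locally convex in `C`. -/
def IsLocallyConvexIn (C C' : Finset (Finset X)) : Prop :=
  ∀ c ∈ C', ∀ c'' ∈ C', hdist c c'' = 2 → interval c c'' ∩ C ⊆ C'

/-- `C` is a conditional antimatroid: contains `∅`, closed under intersection, and
every concept is generated by its extremal points. -/
def IsCondAntimatroid (C : Finset (Finset X)) : Prop :=
  ∅ ∈ C ∧ (∀ c ∈ C, ∀ c' ∈ C, c ∩ c' ∈ C) ∧
  ∀ c ∈ C, ∀ c' ∈ C, (c.filter (fun x => c.erase x ∈ C)) ⊆ c' → c ⊆ c'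

/-!
Pajor's inequality `|C| ≤ |X̄(C)|` and its reverse, `|C|` bounds the number of supports of
cubes of `C`, both follow by splitting `C` along an element `x` into the restriction `C_x` and
the reduction `C^x`, since `|C| = |C_x| + |C^x|`. For ample `C` the first inequality is tight,
which forces `C^x` to be ample and `Y ↦ Y \ {x}` to send the shattered sets containing `x` into
`X̄(C^x)`; by induction every shattered set of `C` is then the support of a cube of `C`.
Hall's theorem matches each `Y ∈ X̄(C)` to a concept `c` with `cubeAt c Y ⊆ C`: a family `𝒮`
of shattered sets consists of supports of cubes made of concepts matchable to `𝒮`, so the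
reverse inequality is Hall's condition, and `|C| = |X̄(C)|` makes the matching a bijection.
For (C2), `c ↦ X \ c` works for every class: in a cube with support `Y` only the top element
contains `Y`.
-/

open Finset

section StrongShattering

variable {α : Type*} [DecidableEq α] {𝒜 ℬ : Finset (Finset α)} {s : Finset α} {a : α}

/-- Strong shattering: `s` is the support of a cube `{t ∪ u | u ⊆ s}` contained in `𝒜`. -/
def StronglyShatters (𝒜 : Finset (Finset α)) (s : Finset α) : Prop :=
  ∃ t, Disjoint t s ∧ ∀ ⦃u⦄, u ⊆ s → t ∪ u ∈ 𝒜

open Classical in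
noncomputable def strongShatterer (𝒜 : Finset (Finset α)) : Finset (Finset α) :=
  (𝒜.biUnion powerset).filter (StronglyShatters 𝒜)

theorem mem_strongShatterer : s ∈ strongShatterer 𝒜 ↔ StronglyShatters 𝒜 s := by
  classical
  refine ⟨fun h => (mem_filter.1 h).2, fun h => mem_filter.2 ⟨?_, h⟩⟩
  obtain ⟨t, -, ht⟩ := h
  exact mem_biUnion.2 ⟨t ∪ s, ht subset_rfl, mem_powerset.2 subset_union_right⟩

theorem StronglyShatters.mono_left (h : 𝒜 ⊆ ℬ) (h𝒜 : StronglyShatters 𝒜 s) :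
    StronglyShatters ℬ s :=
  let ⟨t, hts, ht⟩ := h𝒜
  ⟨t, hts, fun _ hu => h (ht hu)⟩

theorem stronglyShatters_empty : StronglyShatters 𝒜 ∅ ↔ 𝒜.Nonempty := by
  refine ⟨fun ⟨t, _, ht⟩ => ⟨_, ht (empty_subset ∅)⟩,
    fun ⟨c, hc⟩ => ⟨c, disjoint_bot_right, fun u hu => ?_⟩⟩
  rwa [subset_empty.1 hu, union_empty]

theorem stronglyShatters_insert_iff (ha : a ∉ s) :
    StronglyShatters 𝒜 (insert a s) ↔
      StronglyShatters (𝒜.memberSubfamily a ∩ 𝒜.nonMemberSubfamily a) s := by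
  simp only [StronglyShatters, mem_inter, mem_memberSubfamily, mem_nonMemberSubfamily,
    disjoint_insert_right]
  constructor
  · rintro ⟨t, ⟨hat, hts⟩, ht⟩
    refine ⟨t, hts, fun u hu => ?_⟩
    have hau : a ∉ t ∪ u := by simpa [hat] using fun h => ha (hu h)
    refine ⟨⟨?_, hau⟩, ht (hu.trans (subset_insert a s)), hau⟩
    rw [← union_insert]
    exact ht (insert_subset_insert a hu)
  · rintro ⟨t, hts, ht⟩
    have hat : a ∉ t := by simpa using (ht (empty_subset s)).2.2
    refine ⟨t, ⟨hat, hts⟩, fun u hu => ?_⟩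
    by_cases hau : a ∈ u
    · rw [← insert_erase hau, union_insert]
      exact (ht (subset_insert_iff.1 hu)).1.1
    · exact (ht ((subset_insert_iff_of_notMem hau).1 hu)).2.1

theorem StronglyShatters.memberSubfamily_or_nonMemberSubfamily (h : StronglyShatters 𝒜 s)
    (ha : a ∉ s) :
    StronglyShatters (𝒜.memberSubfamily a) s ∨
      StronglyShatters (𝒜.nonMemberSubfamily a) s := by
  obtain ⟨t, hts, ht⟩ := h
  by_cases hat : a ∈ t
  · refine Or.inl ⟨t.erase a, disjoint_of_subset_left (erase_subset a t) hts,
      fun u hu => mem_memberSubfamily.2 ⟨?_, ?_⟩⟩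
    · rw [← insert_union, insert_erase hat]
      exact ht hu
    · simpa using fun h => ha (hu h)
  · exact Or.inr ⟨t, hts, fun u hu =>
      mem_nonMemberSubfamily.2 ⟨ht hu, by simpa [hat] using fun h => ha (hu h)⟩⟩

/-- The reverse of Pajor's inequality `Finset.card_le_card_shatterer`. -/
theorem card_strongShatterer_le (𝒜 : Finset (Finset α)) :
    #(strongShatterer 𝒜) ≤ #𝒜 := by
  refine memberFamily_induction_on 𝒜 ?_ ?_ ?_
  · simp [strongShatterer]
  · classical
    exact (card_filter_le _ _).trans (by simp)
  intro a 𝒜 ih₀ ih₁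
  have h₀ : (strongShatterer 𝒜).filter (a ∉ ·) ⊆
      strongShatterer (𝒜.memberSubfamily a) ∪ strongShatterer (𝒜.nonMemberSubfamily a) := by
    intro s hs
    rw [mem_filter, mem_strongShatterer] at hs
    simpa only [mem_union, mem_strongShatterer] using
      hs.1.memberSubfamily_or_nonMemberSubfamily hs.2
  have h₁ : ((strongShatterer 𝒜).filter (a ∈ ·)).image (erase · a) ⊆
      strongShatterer (𝒜.memberSubfamily a) ∩ strongShatterer (𝒜.nonMemberSubfamily a) := by
    simp only [subset_iff, mem_image, mem_filter, mem_strongShatterer, mem_inter]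
    rintro _ ⟨s, ⟨hs, has⟩, rfl⟩
    rw [← insert_erase has, stronglyShatters_insert_iff (notMem_erase a s)] at hs
    exact ⟨hs.mono_left inter_subset_left, hs.mono_left inter_subset_right⟩
  have h₁_card : #(((strongShatterer 𝒜).filter (a ∈ ·)).image (erase · a)) =
      #((strongShatterer 𝒜).filter (a ∈ ·)) :=
    card_image_of_injOn fun s hs t ht hst => by
      rw [← insert_erase (mem_filter.1 hs).2, ← insert_erase (mem_filter.1 ht).2]
      exact congrArg (insert a) hst
  set ℳ := strongShatterer (𝒜.memberSubfamily a)
  set 𝒩 := strongShatterer (𝒜.nonMemberSubfamily a)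
  calc #(strongShatterer 𝒜)
        = #((strongShatterer 𝒜).filter (a ∉ ·)) +
          #((strongShatterer 𝒜).filter (a ∈ ·)) := by
        rw [add_comm, card_filter_add_card_filter_not]
    _ ≤ #(ℳ ∪ 𝒩) + #(ℳ ∩ 𝒩) := by
        rw [← h₁_card]
        exact add_le_add (card_le_card h₀) (card_le_card h₁)
    _ = #ℳ + #𝒩 := card_union_add_card_inter _ _
    _ ≤ #(𝒜.memberSubfamily a) + #(𝒜.nonMemberSubfamily a) := add_le_add ih₁ ih₀
    _ = #𝒜 := card_memberSubfamily_add_card_nonMemberSubfamily a 𝒜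

end StrongShattering

section Shattering

variable {α : Type*} [DecidableEq α] {𝒜 : Finset (Finset α)} {s : Finset α} {a : α}

theorem Finset.Shatters.notMem (h : ∀ t ∈ 𝒜, a ∉ t) (hs : 𝒜.Shatters s) : a ∉ s :=
  let ⟨t, ht, hst⟩ := hs.exists_superset
  fun ha => h t ht (hst ha)

theorem Finset.Shatters.of_image_erase (hs : (𝒜.image (erase · a)).Shatters s) :
    a ∉ s ∧ 𝒜.Shatters s := by
  have has : a ∉ s := hs.notMem (by simp)
  refine ⟨has, fun t ht => ?_⟩
  obtain ⟨_, hu', rfl⟩ := hs ht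
  obtain ⟨u, hu, rfl⟩ := mem_image.1 hu'
  refine ⟨u, hu, ?_⟩
  rw [inter_erase, erase_eq_of_notMem fun h => has (mem_inter.1 h).1]

theorem Finset.Shatters.insert_of_inter
    (hs : (𝒜.memberSubfamily a ∩ 𝒜.nonMemberSubfamily a).Shatters s) :
    𝒜.Shatters (insert a s) := by
  intro t ht
  obtain ⟨u, hu, hsu⟩ := hs (subset_insert_iff.1 ht)
  simp only [mem_inter, mem_memberSubfamily, mem_nonMemberSubfamily] at hu
  by_cases hat : a ∈ t
  · refine ⟨insert a u, hu.1.1, ?_⟩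
    rw [← insert_inter_distrib, hsu, insert_erase hat]
  · refine ⟨u, hu.2.1, ?_⟩
    rw [insert_inter_of_notMem hu.2.2, hsu, erase_eq_of_notMem hat]

end Shattering

theorem exists_bijOn_of_forall_card_le {α β : Type*} [DecidableEq α] [Inhabited β]
    {𝒴 : Finset β} {𝒞 : Finset α} (R : β → α → Prop) [DecidableRel R]
    (hcard : #𝒞 ≤ #𝒴)
    (hall : ∀ 𝒮 ⊆ 𝒴, #𝒮 ≤ #(𝒞.filter fun c => ∃ Y ∈ 𝒮, R Y c)) :
    ∃ r : α → β, Set.BijOn r 𝒞 𝒴 ∧ ∀ c ∈ 𝒞, R (r c) c := by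
  obtain ⟨f, hf, hfR⟩ := (all_card_le_biUnion_card_iff_exists_injective
    fun Y : 𝒴 => 𝒞.filter (R Y)).1 fun 𝒮 => by
      calc #𝒮 = #(𝒮.map (Function.Embedding.subtype _)) := (card_map _).symm
        _ ≤ _ := hall _ fun Y hY => by
          obtain ⟨Y, -, rfl⟩ := mem_map.1 hY
          exact Y.2
        _ ≤ _ := card_le_card fun c hc => by
          simp only [mem_filter, mem_map, Function.Embedding.coe_subtype] at hc
          obtain ⟨hc, _, ⟨Y, hY, rfl⟩, hYc⟩ := hc
          exact mem_biUnion.2 ⟨Y, hY, mem_filter.2 ⟨hc, hYc⟩⟩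
  simp only [mem_filter] at hfR
  let F : 𝒴 → 𝒞 := fun Y => ⟨f Y, (hfR Y).1⟩
  have hF : Function.Bijective F := by
    have hF : Function.Injective F := fun Y Z h => hf (congrArg Subtype.val h)
    refine (Fintype.bijective_iff_injective_and_card F).2 ⟨hF, ?_⟩
    exact le_antisymm (Fintype.card_le_of_injective F hF) (by simpa using hcard)
  let e := Equiv.ofBijective F hF
  refine ⟨fun c => if hc : c ∈ 𝒞 then e.symm ⟨c, hc⟩ else default,
    ⟨?_, ?_, ?_⟩, ?_⟩
  · intro c hc
    simp [mem_coe.1 hc]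
  · intro c hc c' hc' h
    simp only [mem_coe] at hc hc'
    simp only [dif_pos hc, dif_pos hc'] at h
    exact congrArg Subtype.val (e.symm.injective (Subtype.ext h))
  · intro Y hY
    refine ⟨f ⟨Y, hY⟩, (hfR _).1, ?_⟩
    simp only [dif_pos (hfR ⟨Y, hY⟩).1]
    exact congrArg Subtype.val (e.symm_apply_apply ⟨Y, hY⟩)
  · intro c hc
    simp only [dif_pos hc]
    convert (hfR (e.symm ⟨c, hc⟩)).2
    exact (congrArg Subtype.val (e.apply_symm_apply ⟨c, hc⟩)).symm

section ConceptClasses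

variable {α : Type} [DecidableEq α]

theorem reduction_eq_inter (C : Finset (Finset α)) (x : α) :
    reduction C x = C.memberSubfamily x ∩ C.nonMemberSubfamily x := by
  ext c
  simp only [reduction, mem_filter, mem_inter, mem_memberSubfamily,
    mem_nonMemberSubfamily]
  tauto

theorem card_restrictX_add_card_reduction (C : Finset (Finset α)) (x : α) :
    #(restrictX C x) + #(reduction C x) = #C := by
  rw [restrictX, ← memberSubfamily_union_nonMemberSubfamily, reduction_eq_inter,
    card_union_add_card_inter, card_memberSubfamily_add_card_nonMemberSubfamily]

theorem cubeAt_union_of_disjoint {t u Y : Finset α} (ht : Disjoint t Y) (hu : u ⊆ Y) :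
    cubeAt (t ∪ u) Y = Y.powerset.image (t ∪ ·) := by
  rw [cubeAt, union_sdiff_distrib, sdiff_eq_self_of_disjoint ht,
    sdiff_eq_empty_iff_subset.2 hu, union_empty]

end ConceptClasses

section AmpleClasses

variable {C : Finset (Finset X)} {Y : Finset X} {x : X}

theorem mem_shatteredSets : Y ∈ shatteredSets C ↔ C.Shatters Y := by
  simp [shatteredSets, _root_.Shatters, Finset.Shatters, inter_comm]

theorem card_le_card_shatteredSets (C : Finset (Finset X)) :
    #C ≤ #(shatteredSets C) := by
  convert C.card_le_card_shatterer using 2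
  ext Y
  rw [mem_shatteredSets, mem_shatterer]

theorem shatteredSets_restrictX_subset (C : Finset (Finset X)) (x : X) :
    shatteredSets (restrictX C x) ⊆ (shatteredSets C).filter (x ∉ ·) := by
  intro Y hY
  obtain ⟨hx, hY⟩ := (mem_shatteredSets.1 hY).of_image_erase
  exact mem_filter.2 ⟨mem_shatteredSets.2 hY, hx⟩

theorem notMem_of_mem_shatteredSets_reduction (hY : Y ∈ shatteredSets (reduction C x)) :
    x ∉ Y :=
  (mem_shatteredSets.1 hY).notMem fun _ hc => (mem_filter.1 hc).2.1

theorem image_insert_shatteredSets_reduction_subset (C : Finset (Finset X)) (x : X) :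
    (shatteredSets (reduction C x)).image (insert x) ⊆ (shatteredSets C).filter (x ∈ ·) := by
  simp only [subset_iff, mem_image, mem_filter]
  rintro _ ⟨Y, hY, rfl⟩
  rw [mem_shatteredSets, reduction_eq_inter] at hY
  exact ⟨mem_shatteredSets.2 hY.insert_of_inter, mem_insert_self x Y⟩

theorem card_image_insert_shatteredSets_reduction (C : Finset (Finset X)) (x : X) :
    #((shatteredSets (reduction C x)).image (insert x)) =
      #(shatteredSets (reduction C x)) :=
  card_image_of_injOn fun Y hY Z hZ hYZ => by
    rw [← erase_insert (notMem_of_mem_shatteredSets_reduction hY),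
      ← erase_insert (notMem_of_mem_shatteredSets_reduction hZ)]
    exact congrArg (erase · x) hYZ

theorem IsAmple.card_filter_mem_shatteredSets_le (hC : IsAmple C) (x : X) :
    #((shatteredSets C).filter (x ∈ ·)) ≤ #(reduction C x) := by
  have hsplit := (shatteredSets C).card_filter_add_card_filter_not (x ∈ ·)
  have hrestrict := (card_le_card_shatteredSets (restrictX C x)).trans
    (card_le_card (shatteredSets_restrictX_subset C x))
  have := card_restrictX_add_card_reduction C x
  unfold IsAmple at hC
  omega

theorem IsAmple.isAmple_reduction (hC : IsAmple C) (x : X) : IsAmple (reduction C x) := by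
  refine le_antisymm (card_le_card_shatteredSets _) ?_
  rw [← card_image_insert_shatteredSets_reduction]
  exact (card_le_card (image_insert_shatteredSets_reduction_subset C x)).trans
    (hC.card_filter_mem_shatteredSets_le x)

theorem IsAmple.erase_mem_shatteredSets_reduction (hC : IsAmple C) (hY : Y ∈ shatteredSets C)
    (hx : x ∈ Y) : Y.erase x ∈ shatteredSets (reduction C x) := by
  have himage : (shatteredSets (reduction C x)).image (insert x) =
      (shatteredSets C).filter (x ∈ ·) := by
    refine eq_of_subset_of_card_le (image_insert_shatteredSets_reduction_subset C x) ?_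
    rw [card_image_insert_shatteredSets_reduction]
    exact (hC.card_filter_mem_shatteredSets_le x).trans (card_le_card_shatteredSets _)
  obtain ⟨Z, hZ, rfl⟩ := mem_image.1 (himage ▸ mem_filter.2 ⟨hY, hx⟩)
  rwa [erase_insert (notMem_of_mem_shatteredSets_reduction hZ)]

theorem IsAmple.stronglyShatters (hC : IsAmple C) (hY : Y ∈ shatteredSets C) :
    StronglyShatters C Y := by
  induction Y using Finset.induction_on generalizing C with
  | empty => exact stronglyShatters_empty.2 (shatters_empty.1 (mem_shatteredSets.1 hY))
  | insert a s ha ih =>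
    have hs := hC.erase_mem_shatteredSets_reduction hY (mem_insert_self a s)
    rw [erase_insert ha] at hs
    rw [stronglyShatters_insert_iff ha, ← reduction_eq_inter]
    exact ih (hC.isAmple_reduction a) hs

theorem IsAmple.exists_bijOn_condC1 (hC : IsAmple C) :
    ∃ r, Set.BijOn r C (shatteredSets C) ∧ CondC1 C r := by
  refine exists_bijOn_of_forall_card_le (fun Y c => cubeAt c Y ⊆ C) (le_of_eq hC)
    fun 𝒮 h𝒮 => ?_
  refine (card_le_card fun Y hY => mem_strongShatterer.2 ?_).trans (card_strongShatterer_le _)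
  obtain ⟨t, ht, hcube⟩ := hC.stronglyShatters (h𝒮 hY)
  refine ⟨t, ht, fun u hu => mem_filter.2 ⟨hcube hu, Y, hY, ?_⟩⟩
  rw [cubeAt_union_of_disjoint ht hu, image_subset_iff]
  exact fun s hs => hcube (mem_powerset.1 hs)

end AmpleClasses

theorem IsCubeS.existsUnique_compl_inter_eq_empty {B : Finset (Finset X)} {Y : Finset X}
    (hB : IsCubeS B Y) : ∃! c, c ∈ B ∧ cᶜ ∩ Y = ∅ := by
  obtain ⟨t, htY, rfl⟩ := hB
  simp only [← disjoint_iff_inter_eq_empty, disjoint_compl_left_iff] at htY ⊢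
  refine ⟨t ∪ Y, ⟨mem_image_of_mem _ (mem_powerset_self Y), subset_union_right⟩, ?_⟩
  rintro _ ⟨hc, hYc⟩
  obtain ⟨s, hs, rfl⟩ := mem_image.1 hc
  refine congrArg (t ∪ ·) (subset_antisymm (mem_powerset.1 hs) fun y hy => ?_)
  exact (mem_union.1 (hYc hy)).resolve_left fun hyt => disjoint_left.1 htY hyt hy

theorem condC2_compl (C : Finset (Finset X)) : CondC2 C compl :=
  fun _ _ _ hB => hB.existsUnique_compl_inter_eq_empty

/-- Every ample class admits (a) a bijection `r' : C → X(C)` satisfying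
condition (C1), and (b) an injection `r'' : C → 2^X` satisfying condition (C2). -/
theorem stmt_19 (C : Finset (Finset X)) (hC : IsAmple C) :
    (∃ r' : Finset X → Finset X, (∀ c ∈ C, r' c ∈ shatteredSets C) ∧
      Set.InjOn r' ↑C ∧ (∀ Y ∈ shatteredSets C, ∃ c ∈ C, r' c = Y) ∧ CondC1 C r') ∧
    (∃ r'' : Finset X → Finset X, Set.InjOn r'' ↑C ∧ CondC2 C r'') := by
  obtain ⟨r, hr, hC1⟩ := hC.exists_bijOn_condC1
  exact ⟨⟨r, hr.mapsTo, hr.injOn, fun Y hY => hr.surjOn hY, hC1⟩,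
    ⟨compl, compl_injective.injOn, condC2_compl C⟩⟩
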